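/- Let G be a countable abelian group (written additively) and let P ⊆ G be a subsemigroup containing 0 that is finitely generated as a semigroup and satisfies P − P = G. Then every element of Ω̃ is directed; that is, for every F ∈ Ω̃ and all x, y ∈ F there exists z ∈ F with z − x ∈ P and z − y ∈ P. -/

import Mathlib

/-! Setup: the Wiener–Hopf space of a subsemigroup `P` (containing `0`) of an abelian
group `G`, written additively.  For `x, y ∈ G` we write `x ≤ y` for `y − x ∈ P`.
Subsets of `G` are identified with their `Bool`-valued indicator functions, giving the
power set the topology of pointwise convergence. -/

/-- `P⁻¹g = {x ∈ G : x ≤ g} = {g − p : p ∈ P}`. -/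
def pinvSetAdd {G : Type*} [AddCommGroup G] (P : AddSubmonoid G) (g : G) : Set G :=
  {x : G | g - x ∈ P}

/-- The topology of pointwise convergence on the power set of `G`, obtained by
identifying a subset with its `Bool`-valued indicator function. -/
noncomputable def powerSetTopology (G : Type*) : TopologicalSpace (Set G) :=
  TopologicalSpace.induced (fun F : Set G => F.boolIndicator) inferInstance

/-- `Ω := closure {P⁻¹a : a ∈ P}` in the topology of pointwise convergence. -/
noncomputable def whOmega {G : Type*} [AddCommGroup G] (P : AddSubmonoid G) :
    Set (Set G) :=
  @closure _ (powerSetTopology G) {F : Set G | ∃ a ∈ P, F = pinvSetAdd P a}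

/-- `Ω + g := {F + g : F ∈ Ω}`. -/
noncomputable def whOmegaAdd {G : Type*} [AddCommGroup G] (P : AddSubmonoid G) (g : G) :
    Set (Set G) :=
  {F : Set G | ∃ F₀ ∈ whOmega P, F = (fun x => x + g) '' F₀}

/-- `Ω̃ := ⋃_{g ∈ G} (Ω + g)`. -/
noncomputable def whOmegaTilde {G : Type*} [AddCommGroup G] (P : AddSubmonoid G) :
    Set (Set G) :=
  ⋃ g : G, whOmegaAdd P g


/-- Dickson-type lemma: any subset of `ι → ℕ` with `ι` finite has a finite dominating
subset of (near-)minimal elements. -/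
lemma exists_finset_dominating {ι : Type*} [Finite ι] (A : Set (ι → ℕ)) :
    ∃ B : Finset (ι → ℕ), ↑B ⊆ A ∧ ∀ a ∈ A, ∃ b ∈ B, b ≤ a := by
  classical
  by_contra hc
  push_neg at hc
  choose! g hg1 hg2 using hc
  let Fs : ℕ → Finset (ι → ℕ) := fun k => Nat.rec ∅ (fun _ B => insert (g B) B) k
  have hstep : ∀ k, Fs (k + 1) = insert (g (Fs k)) (Fs k) := fun k => rfl
  have hFsub : ∀ k, ∀ v ∈ Fs k, v ∈ A := by
    intro k
    induction k with
    | zero => simp [Fs]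
    | succ k ih =>
      rw [hstep]
      intro v hv
      rcases Finset.mem_insert.mp hv with h | h
      · exact h ▸ hg1 _ (fun w hw => ih w hw)
      · exact ih v h
  have hmono : ∀ {m k : ℕ}, m ≤ k → Fs m ⊆ Fs k := by
    intro m k h
    induction h with
    | refl => exact Finset.Subset.refl _
    | step h ih => exact fun v hv => (hstep _) ▸ Finset.mem_insert_of_mem (ih hv)
  set f : ℕ → (ι → ℕ) := fun k => g (Fs k) with hf
  have hfA : ∀ k, f k ∈ A := fun k => hg1 _ (fun w hw => hFsub k w hw)
  have hpwo : A.IsPWO :=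
    Set.isPWO_of_wellQuasiOrderedLE A
  obtain ⟨m, k, hmk, hle⟩ := Set.PartiallyWellOrderedOn.exists_lt hpwo hfA
  have : f m ∈ Fs k := hmono hmk (by rw [hstep]; exact Finset.mem_insert_self _ _)
  exact hg2 _ (fun w hw => hFsub k w hw) _ this hle

/-- Representation of elements of a finitely generated submonoid. -/
lemma exists_rep {G : Type*} [AddCommGroup G] {ι : Type*} [Fintype ι] (e : ι → G) {p : G}
    (hp : p ∈ AddSubmonoid.closure (Set.range e)) :
    ∃ v : ι → ℕ, ∑ i, v i • e i = p := by
  classical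
  induction hp using AddSubmonoid.closure_induction with
  | mem x hx =>
    obtain ⟨i, rfl⟩ := hx
    exact ⟨Pi.single i 1, by simp [Pi.single_apply, Finset.sum_ite_eq']⟩
  | zero => exact ⟨0, by simp⟩
  | add p q _ _ hp hq =>
    obtain ⟨v, rfl⟩ := hp
    obtain ⟨w, rfl⟩ := hq
    exact ⟨v + w, by simp [add_nsmul, Finset.sum_add_distrib]⟩

lemma exists_dominating_set {G : Type*} [AddCommGroup G] (P : AddSubmonoid G)
    (hFG : P.FG) (x y : G) :
    ∃ D : Finset G, (∀ d ∈ D, d - x ∈ P ∧ d - y ∈ P) ∧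
      ∀ u : G, u - x ∈ P → u - y ∈ P → ∃ d ∈ D, u - d ∈ P := by
  classical
  obtain ⟨s, hs⟩ := hFG
  set e : {z // z ∈ s} → G := Subtype.val with he
  have hrange : Set.range e = (s : Set G) := Subtype.range_coe
  have heP : ∀ i, e i ∈ P := fun i => by
    rw [← hs]; exact AddSubmonoid.subset_closure i.2
  set π : ({z // z ∈ s} → ℕ) → G := fun v => ∑ i, v i • e i with hπ
  have hπP : ∀ v, π v ∈ P := fun v =>
    AddSubmonoid.sum_mem _ (fun i _ => AddSubmonoid.nsmul_mem _ (heP i) _)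
  have hπrep : ∀ p ∈ P, ∃ v, π v = p := by
    intro p hp
    exact exists_rep e (by rwa [hrange, hs])
  have hπadd : ∀ {b v : {z // z ∈ s} → ℕ}, b ≤ v → π b + π (v - b) = π v := by
    intro b v hbv
    rw [hπ]
    simp only [← Finset.sum_add_distrib, ← add_nsmul]
    congr 1
    ext i
    congr 1
    exact Nat.add_sub_cancel' (hbv i)
  set A : Set ({z // z ∈ s} → ℕ) := {v | x + π v - y ∈ P} with hA
  obtain ⟨B, hBA, hBdom⟩ := exists_finset_dominating A
  refine ⟨B.image (fun v => x + π v), ?_, ?_⟩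
  · intro d hd
    obtain ⟨v, hvB, rfl⟩ := Finset.mem_image.mp hd
    constructor
    · simpa using hπP v
    · exact hBA hvB
  · intro u hux huy
    obtain ⟨v, hv⟩ := hπrep (u - x) hux
    have hvA : v ∈ A := by
      rw [hA, Set.mem_setOf_eq, hv]
      simpa using huy
    obtain ⟨b, hbB, hbv⟩ := hBdom v hvA
    refine ⟨x + π b, Finset.mem_image_of_mem _ hbB, ?_⟩
    have : u - (x + π b) = π (v - b) := by
      have := hπadd hbv
      rw [hv] at this
      -- this : π b + π (v - b) = u - x
      linear_combination (norm := abel) -this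
    rw [this]
    exact hπP _

lemma whOmega_finite_approx {G : Type*} [AddCommGroup G] (P : AddSubmonoid G)
    {F : Set G} (hF : F ∈ whOmega P) (S : Finset G) :
    ∃ a ∈ P, ∀ s ∈ S, (s ∈ F ↔ s ∈ pinvSetAdd P a) := by
  letI : TopologicalSpace (Set G) := powerSetTopology G
  have hF' : F ∈ closure {F : Set G | ∃ a ∈ P, F = pinvSetAdd P a} := hF
  rw [mem_closure_iff] at hF'
  have hopen : IsOpen ((fun H : Set G => H.boolIndicator) ⁻¹'
      (Set.pi ↑S fun t => {F.boolIndicator t})) := by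
    refine Continuous.isOpen_preimage continuous_induced_dom _ ?_
    exact isOpen_set_pi S.finite_toSet (fun t _ => isOpen_discrete _)
  obtain ⟨H, hHo, a, haP, rfl⟩ := hF' _ hopen (fun t _ => rfl)
  refine ⟨a, haP, fun t ht => ?_⟩
  have h1 : (pinvSetAdd P a).boolIndicator t = F.boolIndicator t := hHo t ht
  rw [Set.mem_iff_boolIndicator, Set.mem_iff_boolIndicator, h1]


/-- Let `G` be a countable abelian group and `P ⊆ G` a subsemigroup
containing `0` that is finitely generated as a semigroup and satisfies `P − P = G`.
Then every element `F` of `Ω̃` is directed: for all `x, y ∈ F` there exists `z ∈ F` with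
`z − x ∈ P` and `z − y ∈ P`. -/
theorem whOmegaTilde_directed_of_fg
    {G : Type*} [AddCommGroup G] [Countable G] (P : AddSubmonoid G)
    (hFG : P.FG)
    (hPP : ∀ g : G, ∃ p ∈ P, ∃ q ∈ P, g = p - q) :
    ∀ F ∈ whOmegaTilde P, ∀ x ∈ F, ∀ y ∈ F,
      ∃ z ∈ F, z - x ∈ P ∧ z - y ∈ P := by
  classical
  intro F hF x hx y hy
  obtain ⟨g, hg⟩ := Set.mem_iUnion.mp hF
  obtain ⟨F₀, hF₀, rfl⟩ := hg
  obtain ⟨x₀, hx₀, rfl⟩ := hx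
  obtain ⟨y₀, hy₀, rfl⟩ := hy
  obtain ⟨D, hD1, hD2⟩ := exists_dominating_set P hFG x₀ y₀
  obtain ⟨a, haP, ha⟩ := whOmega_finite_approx P hF₀ (insert x₀ (insert y₀ D))
  have hxa : a - x₀ ∈ P := (ha x₀ (by simp)).mp hx₀
  have hya : a - y₀ ∈ P := (ha y₀ (by simp)).mp hy₀
  obtain ⟨d, hdD, hda⟩ := hD2 a hxa hya
  have hdF₀ : d ∈ F₀ := (ha d (by simp [hdD])).mpr hda
  refine ⟨d + g, ⟨d, hdF₀, rfl⟩, ?_, ?_⟩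
  · simpa using (hD1 d hdD).1
  · simpa using (hD1 d hdD).2
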